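/- If λ ≥ max_{1≤k≤p} (1/(n²αwₖ)) [ |Σᵢ Σⱼ δᵢ(x_{i,k} − x_{j,k})·1(yᵢ < yⱼ)| + Σᵢ Σⱼ 1(yᵢ = yⱼ)·δᵢ·|x_{i,k} − x_{j,k}| ], with α ∈ (0,1] and all wₖ > 0, then β = 0 is a minimizer of the Gehan loss plus elastic net penalty L(β) + λ[α‖w∘β‖₁ + (1−α)/2 ‖β‖₂²]. -/
import Mathlib


/-- If λ is at least the stated λ_max bound, then β = 0 minimizes the Gehan
loss plus elastic net penalty. -/
theorem zero_optimal_gehan_elastic_net (n p : ℕ) (y : Fin n → ℝ)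
    (x : Fin n → Fin p → ℝ) (δ : Fin n → ℝ) (hy : ∀ i, 0 < y i)
    (hδ : ∀ i, δ i = 0 ∨ δ i = 1) (lam α : ℝ) (hα : α ∈ Set.Ioc (0 : ℝ) 1)
    (w : Fin p → ℝ) (hw : ∀ k, 0 < w k)
    (hlam : ∀ k : Fin p,
      (1 / ((n : ℝ) ^ 2 * α * w k)) *
        (|∑ i, ∑ j, δ i * (x i k - x j k) * (if y i < y j then (1 : ℝ) else 0)| +
         ∑ i, ∑ j, (if y i = y j then (1 : ℝ) else 0) * δ i * |x i k - x j k|) ≤ lam) :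
    ∀ β : Fin p → ℝ,
      (1 / (n : ℝ) ^ 2) * ∑ i, ∑ j, δ i *
          max ((Real.log (y j) - ∑ k, β k * x j k) -
               (Real.log (y i) - ∑ k, β k * x i k)) 0 +
        lam * (α * ∑ k, w k * |β k| + (1 - α) / 2 * ∑ k, (β k) ^ 2)
      ≥ (1 / (n : ℝ) ^ 2) * ∑ i, ∑ j, δ i *
          max ((Real.log (y j)) - (Real.log (y i))) 0 := by
  obtain ⟨hα0, hα1⟩ := hα
  intro β
  have hδ0 : ∀ i, 0 ≤ δ i := fun i => by rcases hδ i with h | h <;> rw [h] <;> norm_num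
  rcases Nat.eq_zero_or_pos p with hp | hp
  · subst hp
    simp
  have hc : (0:ℝ) ≤ 1 / (n:ℝ)^2 := by positivity
  set S : Fin p → ℝ := fun k =>
    ∑ i, ∑ j, δ i * (x i k - x j k) * (if y i < y j then (1:ℝ) else 0) with hS
  set T : Fin p → ℝ := fun k =>
    ∑ i, ∑ j, (if y i = y j then (1:ℝ) else 0) * δ i * |x i k - x j k| with hT
  have hT0 : ∀ k, 0 ≤ T k := by
    intro k
    refine Finset.sum_nonneg fun i _ => Finset.sum_nonneg fun j _ => ?_
    refine mul_nonneg (mul_nonneg ?_ (hδ0 i)) (abs_nonneg _)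
    split_ifs <;> norm_num
  have hlam0 : 0 ≤ lam := by
    refine le_trans ?_ (hlam ⟨0, hp⟩)
    have h1 : (0:ℝ) ≤ 1 / ((n:ℝ)^2 * α * w ⟨0,hp⟩) := by
      have := hw ⟨0, hp⟩; positivity
    exact mul_nonneg h1 (add_nonneg (abs_nonneg _) (hT0 ⟨0,hp⟩))
  -- pointwise subgradient inequality
  have key : ∀ i j : Fin n,
      δ i * max (Real.log (y j) - Real.log (y i)) 0
        + δ i * ((if y i < y j then (1:ℝ) else 0) * ∑ k, β k * (x i k - x j k))
        - δ i * ((if y i = y j then (1:ℝ) else 0) * ∑ k, |β k| * |x i k - x j k|)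
      ≤ δ i * max ((Real.log (y j) - ∑ k, β k * x j k) -
               (Real.log (y i) - ∑ k, β k * x i k)) 0 := by
    intro i j
    have harg : (Real.log (y j) - ∑ k, β k * x j k) -
        (Real.log (y i) - ∑ k, β k * x i k)
        = (Real.log (y j) - Real.log (y i)) + ∑ k, β k * (x i k - x j k) := by
      have h1 : ∑ k, β k * (x i k - x j k)
          = (∑ k, β k * x i k) - ∑ k, β k * x j k := by
        rw [← Finset.sum_sub_distrib]
        exact Finset.sum_congr rfl fun k _ => by ring
      rw [h1]; ring
    rw [harg]
    set a := Real.log (y j) - Real.log (y i) with ha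
    set t := ∑ k, β k * (x i k - x j k) with ht
    have hsum0 : 0 ≤ ∑ k, |β k| * |x i k - x j k| :=
      Finset.sum_nonneg fun k _ => mul_nonneg (abs_nonneg _) (abs_nonneg _)
    rcases lt_trichotomy (y i) (y j) with h | h | h
    · have hapos : 0 < a := sub_pos.mpr (Real.log_lt_log (hy i) h)
      have hne : y i ≠ y j := ne_of_lt h
      rw [if_pos h, if_neg hne, max_eq_left hapos.le]
      have := mul_le_mul_of_nonneg_left (le_max_left (a + t) 0) (hδ0 i)
      nlinarith [this]
    · have ha0 : a = 0 := by rw [ha, h, sub_self]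
      have hnlt : ¬ y i < y j := by rw [h]; exact lt_irrefl _
      rw [if_neg hnlt, if_pos h, ha0]
      have h1 : 0 ≤ δ i * max t 0 := mul_nonneg (hδ0 i) (le_max_right _ _)
      have h2 : 0 ≤ δ i * (1 * ∑ k, |β k| * |x i k - x j k|) := by
        rw [one_mul]; exact mul_nonneg (hδ0 i) hsum0
      simp only [max_self, mul_zero, zero_mul, zero_add]
      linarith
    · have haneg : a < 0 := sub_neg.mpr (Real.log_lt_log (hy j) h)
      have hnlt : ¬ y i < y j := not_lt.mpr h.le
      have hne : y i ≠ y j := ne_of_gt h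
      rw [if_neg hnlt, if_neg hne, max_eq_right haneg.le]
      have h1 : 0 ≤ δ i * max (a + t) 0 := mul_nonneg (hδ0 i) (le_max_right _ _)
      simp only [mul_zero, zero_mul, add_zero, sub_zero]
      linarith
  have hsum : ∑ i, ∑ j, (δ i * max (Real.log (y j) - Real.log (y i)) 0
        + δ i * ((if y i < y j then (1:ℝ) else 0) * ∑ k, β k * (x i k - x j k))
        - δ i * ((if y i = y j then (1:ℝ) else 0) * ∑ k, |β k| * |x i k - x j k|))
      ≤ ∑ i, ∑ j, δ i * max ((Real.log (y j) - ∑ k, β k * x j k) -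
               (Real.log (y i) - ∑ k, β k * x i k)) 0 :=
    Finset.sum_le_sum fun i _ => Finset.sum_le_sum fun j _ => key i j
  have swap3 : ∀ (f : Fin p → Fin n → Fin n → ℝ),
      ∑ k, ∑ i, ∑ j, f k i j = ∑ i, ∑ j, ∑ k, f k i j := by
    intro f
    rw [Finset.sum_comm]
    exact Finset.sum_congr rfl fun i _ => Finset.sum_comm
  have hB : ∑ k, β k * S k
      = ∑ i, ∑ j, δ i * ((if y i < y j then (1:ℝ) else 0) * ∑ k, β k * (x i k - x j k)) := by
    simp only [hS, Finset.mul_sum]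
    rw [swap3]
    refine Finset.sum_congr rfl fun i _ => Finset.sum_congr rfl fun j _ =>
      Finset.sum_congr rfl fun k _ => by ring
  have hC : ∑ k, |β k| * T k
      = ∑ i, ∑ j, δ i * ((if y i = y j then (1:ℝ) else 0) * ∑ k, |β k| * |x i k - x j k|) := by
    simp only [hT, Finset.mul_sum]
    rw [swap3]
    refine Finset.sum_congr rfl fun i _ => Finset.sum_congr rfl fun j _ =>
      Finset.sum_congr rfl fun k _ => by ring
  have hsplit : ∑ i, ∑ j, (δ i * max (Real.log (y j) - Real.log (y i)) 0
        + δ i * ((if y i < y j then (1:ℝ) else 0) * ∑ k, β k * (x i k - x j k))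
        - δ i * ((if y i = y j then (1:ℝ) else 0) * ∑ k, |β k| * |x i k - x j k|))
      = (∑ i, ∑ j, δ i * max (Real.log (y j) - Real.log (y i)) 0)
        + (∑ k, β k * S k) - (∑ k, |β k| * T k) := by
    rw [hB, hC]
    simp only [← Finset.sum_add_distrib, ← Finset.sum_sub_distrib]
  have hBbound : -∑ k, |β k| * (|S k| + T k) + ∑ k, |β k| * T k ≤ ∑ k, β k * S k := by
    have h1 : ∀ k ∈ Finset.univ, -(|β k| * (|S k| + T k)) + |β k| * T k ≤ β k * S k := by
      intro k _
      have h2 : -|β k * S k| ≤ β k * S k := neg_abs_le _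
      rw [abs_mul] at h2
      nlinarith [abs_nonneg (β k), hT0 k]
    calc -∑ k, |β k| * (|S k| + T k) + ∑ k, |β k| * T k
        = ∑ k, (-(|β k| * (|S k| + T k)) + |β k| * T k) := by
          rw [Finset.sum_add_distrib, Finset.sum_neg_distrib]
      _ ≤ ∑ k, β k * S k := Finset.sum_le_sum h1
  -- main loss inequality, before scaling
  have hmain : (∑ i, ∑ j, δ i * max (Real.log (y j) - Real.log (y i)) 0)
        - ∑ k, |β k| * (|S k| + T k)
      ≤ ∑ i, ∑ j, δ i * max ((Real.log (y j) - ∑ k, β k * x j k) -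
               (Real.log (y i) - ∑ k, β k * x i k)) 0 := by
    rw [hsplit] at hsum
    linarith
  -- penalty bound
  have hpen : (1 / (n:ℝ)^2) * ∑ k, |β k| * (|S k| + T k)
      ≤ lam * α * ∑ k, w k * |β k| := by
    rw [Finset.mul_sum, Finset.mul_sum]
    refine Finset.sum_le_sum fun k _ => ?_
    have hk := hlam k
    have hcalc : (α * w k) * (1 / ((n:ℝ)^2 * α * w k)) = 1 / (n:ℝ)^2 := by
      rw [one_div, one_div, mul_inv, mul_inv]
      have h1 : α * α⁻¹ = 1 := mul_inv_cancel₀ (ne_of_gt hα0)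
      have h2 : w k * (w k)⁻¹ = 1 := mul_inv_cancel₀ (ne_of_gt (hw k))
      calc (α * w k) * (((n:ℝ)^2)⁻¹ * α⁻¹ * (w k)⁻¹)
          = (α * α⁻¹) * (w k * (w k)⁻¹) * ((n:ℝ)^2)⁻¹ := by ring
        _ = ((n:ℝ)^2)⁻¹ := by rw [h1, h2]; ring
    have h3 : (α * w k) * ((1 / ((n:ℝ)^2 * α * w k)) * (|S k| + T k))
        ≤ (α * w k) * lam :=
      mul_le_mul_of_nonneg_left hk (le_of_lt (mul_pos hα0 (hw k)))
    rw [← mul_assoc, hcalc] at h3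
    calc (1 / (n:ℝ)^2) * (|β k| * (|S k| + T k))
        = |β k| * ((1 / (n:ℝ)^2) * (|S k| + T k)) := by ring
      _ ≤ |β k| * ((α * w k) * lam) := mul_le_mul_of_nonneg_left h3 (abs_nonneg _)
      _ = lam * α * (w k * |β k|) := by ring
  have hpen2 : 0 ≤ lam * ((1-α)/2 * ∑ k, (β k)^2) := by
    refine mul_nonneg hlam0 (mul_nonneg (by linarith) ?_)
    exact Finset.sum_nonneg fun k _ => sq_nonneg _
  have hscaled := mul_le_mul_of_nonneg_left hmain hc
  have hexp : lam * (α * ∑ k, w k * |β k| + (1-α)/2 * ∑ k, (β k)^2)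
      = lam * α * ∑ k, w k * |β k| + lam * ((1-α)/2 * ∑ k, (β k)^2) := by ring
  rw [ge_iff_le, hexp]
  nlinarith [hscaled, hpen, hpen2, hc]
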